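/- arXiv:1901.11534 — 5 statements merged into one kernel-verified Lean document; each statement's English description precedes it below -/
import Mathlib

section
/- If λ/√(ω-ω₀) ∉ L²(ℝ^d) (i.e. ∫ |λ(q)|²/(ω(q)-ω₀) dq = ∞), then Φ(z) → -∞ as z ↑ ω₀+γ. -/
open MeasureTheory Filter

/-- If `λ/√(ω-ω₀) ∉ L²` (i.e. `∫ |λ(q)|²/(ω(q)-ω₀) dq = ∞`), then
`Φ(z) → -∞` as `z ↑ ω₀+γ`. -/
theorem phi_tendsto_atBot
    (d : ℕ) (γ α : ℝ) (hα : 0 < α)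
    (ω : (Fin d → ℝ) → ℝ) (hωpos : ∀ k, 0 ≤ ω k) (hωmeas : Measurable ω)
    (hωbdd : BddAbove (Set.range ω))
    (lam : (Fin d → ℝ) → ℝ) (hlam : MemLp lam 2 volume)
    (ω₀ : ℝ) (hω₀ : ω₀ = ⨅ k, ω k)
    (Φ : ℝ → ℝ)
    (hΦ : ∀ z < ω₀ + γ, Φ z = -γ - z - α ^ 2 * ∫ q, lam q ^ 2 / (ω q + γ - z))
    (hint : ∀ z < ω₀ + γ, Integrable (fun q => lam q ^ 2 / (ω q + γ - z)))
    (hir : ¬ Integrable (fun q => lam q ^ 2 / (ω q - ω₀))) :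
    Tendsto Φ (nhdsWithin (ω₀ + γ) (Set.Iio (ω₀ + γ))) atBot := by
  -- basic facts
  have hbb : BddBelow (Set.range ω) := ⟨0, by rintro y ⟨k, rfl⟩; exact hωpos k⟩
  have hω₀le : ∀ q, ω₀ ≤ ω q := fun q => hω₀ ▸ ciInf_le hbb q
  set zseq : ℕ → ℝ := fun n => ω₀ + γ - 1 / (n + 1) with hzseq
  have hzlt : ∀ n : ℕ, zseq n < ω₀ + γ := by
    intro n
    have : (0:ℝ) < 1 / (n + 1) := by positivity
    simp only [hzseq]; linarith
  have hden : ∀ (n : ℕ) q, ω q + γ - zseq n = (ω q - ω₀) + 1 / (n + 1) := by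
    intro n q; simp only [hzseq]; ring
  set fn : ℕ → (Fin d → ℝ) → ENNReal :=
    fun n q => ENNReal.ofReal (lam q ^ 2 / (ω q + γ - zseq n)) with hfn
  have hfmeas : ∀ n, AEMeasurable (fn n) volume := by
    intro n
    exact ((hlam.1.aemeasurable.pow_const 2).div
      (((hωmeas.add_const γ).sub_const (zseq n)).aemeasurable)).ennreal_ofReal
  have hmono : ∀ q, Monotone fun n => fn n q := by
    intro q m n hmn
    apply ENNReal.ofReal_le_ofReal
    rw [hden, hden]
    have h1 : (0:ℝ) < 1 / ((n:ℝ) + 1) := by positivity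
    have h2 : (1:ℝ) / ((n:ℝ) + 1) ≤ 1 / ((m:ℝ) + 1) := by
      apply one_div_le_one_div_of_le (by positivity)
      exact_mod_cast Nat.add_le_add_right hmn 1
    have ha : (0:ℝ) ≤ ω q - ω₀ := by linarith [hω₀le q]
    exact div_le_div_of_nonneg_left (sq_nonneg _) (by linarith) (by linarith)
  -- key : sup of the lintegrals is infinite
  have key : (⨆ n : ℕ, ∫⁻ q, fn n q) = ⊤ := by
    by_contra h
    apply hir
    have hsup : ∫⁻ q, ⨆ n, fn n q = ⨆ n, ∫⁻ q, fn n q :=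
      lintegral_iSup' hfmeas (Filter.Eventually.of_forall hmono)
    have hle : ∀ q, ENNReal.ofReal (lam q ^ 2 / (ω q - ω₀)) ≤ ⨆ n, fn n q := by
      intro q
      have ha : (0:ℝ) ≤ ω q - ω₀ := by linarith [hω₀le q]
      rcases eq_or_lt_of_le ha with ha0 | ha0
      · rw [← ha0, div_zero, ENNReal.ofReal_zero]; exact zero_le
      · have ht0 : Tendsto (fun n : ℕ => (1:ℝ) / (n + 1)) atTop (nhds 0) :=
          tendsto_one_div_add_atTop_nhds_zero_nat
        have ht : Tendsto (fun n : ℕ => lam q ^ 2 / (ω q + γ - zseq n)) atTop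
            (nhds (lam q ^ 2 / (ω q - ω₀))) := by
          simp only [hden]
          have hd : Tendsto (fun n : ℕ => (ω q - ω₀) + 1 / (n + 1)) atTop
              (nhds (ω q - ω₀)) := by
            simpa using tendsto_const_nhds.add ht0
          exact tendsto_const_nhds.div hd (ne_of_gt ha0)
        have ht2 : Tendsto (fun n => fn n q) atTop
            (nhds (ENNReal.ofReal (lam q ^ 2 / (ω q - ω₀)))) :=
          (ENNReal.continuous_ofReal.tendsto _).comp ht
        exact le_of_tendsto' ht2 (fun n => le_iSup (fun n => fn n q) n)
    have hfin : ∫⁻ q, ENNReal.ofReal (lam q ^ 2 / (ω q - ω₀)) < ⊤ := by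
      calc ∫⁻ q, ENNReal.ofReal (lam q ^ 2 / (ω q - ω₀))
          ≤ ∫⁻ q, ⨆ n, fn n q := lintegral_mono hle
        _ = ⨆ n, ∫⁻ q, fn n q := hsup
        _ < ⊤ := lt_top_iff_ne_top.2 h
    have hnn : 0 ≤ᵐ[volume] fun q => lam q ^ 2 / (ω q - ω₀) := by
      apply Filter.Eventually.of_forall
      intro q
      have ha : (0:ℝ) ≤ ω q - ω₀ := by linarith [hω₀le q]
      positivity
    refine ⟨?_, (hasFiniteIntegral_iff_ofReal hnn).2 hfin⟩
    exact ((hlam.1.aemeasurable.pow_const 2).div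
      ((hωmeas.sub_const ω₀).aemeasurable)).aestronglyMeasurable
  -- conclusion
  rw [tendsto_atBot]
  intro b
  set K : ℝ := 1 - ω₀ - 2 * γ with hK
  set C : ℝ := max 0 ((K - b) / α ^ 2) with hC
  have hC0 : 0 ≤ C := le_max_left _ _
  have hαC : K - b ≤ α ^ 2 * C := by
    have h := le_max_right 0 ((K - b) / α ^ 2)
    rw [div_le_iff₀ (by positivity)] at h
    nlinarith
  obtain ⟨n, hn⟩ : ∃ n : ℕ, ENNReal.ofReal C < ∫⁻ q, fn n q := by
    rw [← lt_iSup_iff, key]; exact ENNReal.ofReal_lt_top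
  have hzn := hint (zseq n) (hzlt n)
  have hposd : ∀ q, (0:ℝ) < ω q + γ - zseq n := by
    intro q
    rw [hden n q]
    have h1 : (0:ℝ) < 1 / ((n:ℝ) + 1) := by positivity
    linarith [hω₀le q]
  have hnnz : 0 ≤ᵐ[volume] fun q => lam q ^ 2 / (ω q + γ - zseq n) := by
    apply Filter.Eventually.of_forall
    intro q; have := hposd q; positivity
  have hintrepr : ∫ q, lam q ^ 2 / (ω q + γ - zseq n) = (∫⁻ q, fn n q).toReal := by
    rw [integral_eq_lintegral_of_nonneg_ae hnnz hzn.1]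
  have hfinlint : ∫⁻ q, fn n q ≠ ⊤ := by
    have h2 := hzn.2
    rw [hasFiniteIntegral_iff_ofReal hnnz] at h2
    exact h2.ne
  have hCle : C ≤ ∫ q, lam q ^ 2 / (ω q + γ - zseq n) := by
    rw [hintrepr]
    exact (ENNReal.ofReal_le_iff_le_toReal hfinlint).1 hn.le
  -- eventual bound
  have hmaxlt : max (zseq n) (ω₀ + γ - 1) < ω₀ + γ := by
    apply max_lt (hzlt n); linarith
  filter_upwards [Ioo_mem_nhdsLT hmaxlt] with z hz
  obtain ⟨hz1, hz2⟩ := hz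
  have hz1' : zseq n < z := lt_of_le_of_lt (le_max_left _ _) hz1
  have hz1'' : ω₀ + γ - 1 < z := lt_of_le_of_lt (le_max_right _ _) hz1
  have hImono : ∫ q, lam q ^ 2 / (ω q + γ - zseq n) ≤ ∫ q, lam q ^ 2 / (ω q + γ - z) := by
    apply integral_mono hzn (hint z hz2)
    intro q
    have hpz : (0:ℝ) < ω q + γ - z := by linarith [hω₀le q]
    have : ω q + γ - z ≤ ω q + γ - zseq n := by linarith
    exact div_le_div_of_nonneg_left (sq_nonneg _) hpz this
  rw [hΦ z hz2]
  have hCleI : C ≤ ∫ q, lam q ^ 2 / (ω q + γ - z) := le_trans hCle hImono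
  have hmul : α ^ 2 * C ≤ α ^ 2 * ∫ q, lam q ^ 2 / (ω q + γ - z) := by
    gcongr
  simp only [hK] at hαC
  linarith
end

section
/- Suppose ∫ |λ(q)|²/(ω(q)-ω₀) dq = ∞. Then for every α > 0 the function Φ has a unique zero E = E(α,γ) in the interval (-∞, ω₀+γ). -/
open MeasureTheory Filter Topology

/-- If `∫ |λ(q)|²/(ω(q)-ω₀) dq = ∞` (infrared singular case), then for every
`α > 0` the function `Φ` has a unique zero `E` in `(-∞, ω₀+γ)`. -/
theorem phi_unique_zero_infrared_singular
    (d : ℕ) (γ α : ℝ) (hα : 0 < α)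
    (ω : (Fin d → ℝ) → ℝ) (hωpos : ∀ k, 0 ≤ ω k) (hωcont : Continuous ω)
    (hωbdd : BddAbove (Set.range ω))
    (lam : (Fin d → ℝ) → ℝ) (hlam : MemLp lam 2 volume)
    (hlamne : ¬ lam =ᵐ[volume] 0)
    (ω₀ : ℝ) (hω₀ : ω₀ = ⨅ k, ω k)
    (Φ : ℝ → ℝ)
    (hΦ : ∀ z < ω₀ + γ, Φ z = -γ - z - α ^ 2 * ∫ q, lam q ^ 2 / (ω q + γ - z))
    (hint : ∀ z < ω₀ + γ, Integrable (fun q => lam q ^ 2 / (ω q + γ - z)))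
    (hir : ¬ Integrable (fun q => lam q ^ 2 / (ω q - ω₀))) :
    ∃! E : ℝ, E < ω₀ + γ ∧ Φ E = 0 := by
  have hω₀le : ∀ q, ω₀ ≤ ω q := by
    intro q
    rw [hω₀]
    exact ciInf_le ⟨0, by rintro x ⟨k, rfl⟩; exact hωpos k⟩ q
  have hden : ∀ z, z < ω₀ + γ → ∀ q, 0 < ω q + γ - z := by
    intro z hz q
    have := hω₀le q; linarith
  set I : ℝ → ℝ := fun z => ∫ q, lam q ^ 2 / (ω q + γ - z) with hIdef
  have hFnn : ∀ z, z < ω₀ + γ → ∀ q, 0 ≤ lam q ^ 2 / (ω q + γ - z) := fun z hz q =>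
    div_nonneg (sq_nonneg _) (hden z hz q).le
  have hImono : ∀ z₁ z₂, z₁ ≤ z₂ → z₂ < ω₀ + γ → I z₁ ≤ I z₂ := by
    intro z₁ z₂ h12 h2
    apply integral_mono (hint z₁ (lt_of_le_of_lt h12 h2)) (hint z₂ h2)
    intro q
    have h2q := hden z₂ h2 q
    exact div_le_div_of_nonneg_left (sq_nonneg _) h2q (by linarith)
  -- continuity of I, hence of Φ
  have hIcont : ∀ z₀, z₀ < ω₀ + γ → ContinuousAt I z₀ := by
    intro z₀ hz₀
    set z₁ := (z₀ + (ω₀ + γ)) / 2 with hz₁def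
    have hz₁ : z₁ < ω₀ + γ := by rw [hz₁def]; linarith
    have hz₀₁ : z₀ < z₁ := by rw [hz₁def]; linarith
    apply continuousAt_of_dominated (bound := fun q => lam q ^ 2 / (ω q + γ - z₁))
    · filter_upwards [Iio_mem_nhds hz₀₁] with z hz
      exact (hint z (hz.trans hz₁)).aestronglyMeasurable
    · filter_upwards [Iio_mem_nhds hz₀₁] with z hz
      refine Eventually.of_forall fun q => ?_
      have h1q := hden z₁ hz₁ q
      rw [Real.norm_eq_abs, abs_of_nonneg (hFnn z (hz.trans hz₁) q)]
      exact div_le_div_of_nonneg_left (sq_nonneg _) h1q (by linarith [hz.out])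
    · exact hint z₁ hz₁
    · refine Eventually.of_forall fun q => ?_
      exact ContinuousAt.div continuousAt_const
        ((continuous_const.sub continuous_id).continuousAt)
        (ne_of_gt (hden z₀ hz₀ q))
  have hΦcontAt : ∀ z₀, z₀ < ω₀ + γ → ContinuousAt Φ z₀ := by
    intro z₀ hz₀
    have hC : ContinuousAt (fun z => -γ - z - α ^ 2 * I z) z₀ := by
      exact ((continuousAt_const.sub continuousAt_id).sub
        (continuousAt_const.mul (hIcont z₀ hz₀)))
    apply hC.congr
    filter_upwards [Iio_mem_nhds hz₀] with z hz
    exact (hΦ z hz).symm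
  -- strict antitonicity
  have hΦanti : ∀ z₁ z₂, z₁ < z₂ → z₂ < ω₀ + γ → Φ z₂ < Φ z₁ := by
    intro z₁ z₂ h12 h2
    rw [hΦ z₁ (h12.trans h2), hΦ z₂ h2]
    have h := hImono z₁ z₂ h12.le h2
    have := mul_le_mul_of_nonneg_left h (sq_nonneg α)
    linarith
  -- unboundedness of I near ω₀ + γ
  have hzpos : ∀ n : ℕ, (0:ℝ) < 1 / (n + 1) := fun n => by positivity
  have hzn : ∀ n : ℕ, ω₀ + γ - 1 / (n + 1) < ω₀ + γ := fun n => by linarith [hzpos n]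
  have hIunb : ∀ M : ℝ, ∃ n : ℕ, M < I (ω₀ + γ - 1 / (n + 1)) := by
    intro M
    by_contra hcon
    push_neg at hcon
    apply hir
    have hlm := hlam.aestronglyMeasurable
    have hmeas : AEStronglyMeasurable (fun q => lam q ^ 2 / (ω q - ω₀)) volume := by
      have h : AEMeasurable (fun q => lam q * lam q / (ω q - ω₀)) volume :=
        (hlm.aemeasurable.mul hlm.aemeasurable).div
          ((hωcont.sub (continuous_const (y := ω₀))).measurable.aemeasurable)
      simpa [pow_two] using h.aestronglyMeasurable
    have hfnn : ∀ q, 0 ≤ lam q ^ 2 / (ω q - ω₀) := fun q =>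
      div_nonneg (sq_nonneg _) (by linarith [hω₀le q])
    set g : ℕ → (Fin d → ℝ) → ENNReal := fun n q =>
      ENNReal.ofReal (lam q ^ 2 / (ω q + γ - (ω₀ + γ - 1 / (n + 1)))) with hgdef
    have key : ∀ q, ENNReal.ofReal (lam q ^ 2 / (ω q - ω₀)) ≤ liminf (fun n => g n q) atTop := by
      intro q
      rcases eq_or_lt_of_le (hω₀le q) with heq | hlt
      · simp [← heq]
      · have h0 : Tendsto (fun n : ℕ => (1:ℝ) / (n + 1)) atTop (𝓝 0) :=
          tendsto_one_div_add_atTop_nhds_zero_nat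
        have h1 : Tendsto (fun n : ℕ => ω q + γ - (ω₀ + γ - 1 / (n + 1))) atTop
            (𝓝 (ω q - ω₀)) := by
          have h2 : Tendsto (fun n : ℕ => ω q + γ - (ω₀ + γ - 1 / (n + 1))) atTop
              (𝓝 (ω q + γ - (ω₀ + γ - 0))) :=
            tendsto_const_nhds.sub (tendsto_const_nhds.sub h0)
          rwa [show ω q + γ - (ω₀ + γ - 0) = ω q - ω₀ by ring] at h2
        have htd : Tendsto (fun n : ℕ => lam q ^ 2 / (ω q + γ - (ω₀ + γ - 1 / (n + 1)))) atTop
            (𝓝 (lam q ^ 2 / (ω q - ω₀))) :=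
          tendsto_const_nhds.div h1 (ne_of_gt (by linarith))
        have := (ENNReal.tendsto_ofReal htd).liminf_eq
        rw [hgdef]
        exact le_of_eq this.symm
    have hgm : ∀ n, AEMeasurable (g n) volume := fun n =>
      ENNReal.measurable_ofReal.comp_aemeasurable (hint _ (hzn n)).aemeasurable
    have hln : ∀ n, ∫⁻ q, g n q = ENNReal.ofReal (I (ω₀ + γ - 1 / (n + 1))) := fun n =>
      (ofReal_integral_eq_lintegral_ofReal (hint _ (hzn n))
        (Eventually.of_forall (hFnn _ (hzn n)))).symm
    refine ⟨hmeas, ?_⟩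
    rw [hasFiniteIntegral_iff_ofReal (Eventually.of_forall hfnn)]
    calc ∫⁻ q, ENNReal.ofReal (lam q ^ 2 / (ω q - ω₀))
        ≤ ∫⁻ q, liminf (fun n => g n q) atTop := lintegral_mono key
      _ ≤ liminf (fun n => ∫⁻ q, g n q) atTop := lintegral_liminf_le' hgm
      _ ≤ ENNReal.ofReal M := by
          have hle : liminf (fun n => ∫⁻ q, g n q) atTop ≤
              liminf (fun _ : ℕ => ENNReal.ofReal M) atTop :=
            liminf_le_liminf (Eventually.of_forall fun n =>
              (hln n).le.trans (ENNReal.ofReal_le_ofReal (hcon n)))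
          rwa [liminf_const] at hle
      _ < ⊤ := ENNReal.ofReal_lt_top
  -- existence of a sign change
  set K := I (ω₀ + γ - 1) with hKdef
  obtain ⟨n, hn⟩ := hIunb (max 0 ((1 - ω₀ - 2 * γ) / α ^ 2))
  set b := ω₀ + γ - 1 / (n + 1) with hbdef
  have hb1 : ω₀ + γ - 1 ≤ b := by
    have h1n : 1 / ((n:ℝ) + 1) ≤ 1 := by
      rw [div_le_one (by positivity)]; linarith [Nat.cast_nonneg (α := ℝ) n]
    rw [hbdef]; linarith
  have hblt : b < ω₀ + γ := hzn n
  have hΦb : Φ b < 0 := by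
    rw [hΦ b hblt]
    have h2 : (1 - ω₀ - 2 * γ) / α ^ 2 < I b := lt_of_le_of_lt (le_max_right _ _) hn
    rw [div_lt_iff₀ (by positivity)] at h2
    show -γ - b - α ^ 2 * I b < 0
    linarith
  set a := min b (min (-γ - α ^ 2 * K - 1) (ω₀ + γ - 1)) with hadef
  have hab : a ≤ b := min_le_left _ _
  have ha1 : a ≤ ω₀ + γ - 1 := le_trans (min_le_right _ _) (min_le_right _ _)
  have halt : a < ω₀ + γ := by linarith
  have haK : I a ≤ K := hImono a _ ha1 (by linarith)
  have hΦa : 0 < Φ a := by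
    rw [hΦ a halt]
    have ha2 : a ≤ -γ - α ^ 2 * K - 1 := le_trans (min_le_right _ _) (min_le_left _ _)
    have : α ^ 2 * I a ≤ α ^ 2 * K := mul_le_mul_of_nonneg_left haK (sq_nonneg α)
    linarith
  have hcontIcc : ContinuousOn Φ (Set.Icc a b) := fun x hx =>
    (hΦcontAt x (lt_of_le_of_lt hx.2 hblt)).continuousWithinAt
  have h0mem : (0:ℝ) ∈ Set.Icc (Φ b) (Φ a) := ⟨hΦb.le, hΦa.le⟩
  obtain ⟨E, hEmem, hΦE⟩ := intermediate_value_Icc' hab hcontIcc h0mem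
  refine ⟨E, ⟨lt_of_le_of_lt hEmem.2 hblt, hΦE⟩, ?_⟩
  rintro y ⟨hy, hΦy⟩
  by_contra hne
  rcases lt_or_gt_of_ne hne with h | h
  · have := hΦanti y E h (lt_of_le_of_lt hEmem.2 hblt)
    rw [hΦE, hΦy] at this; exact lt_irrefl _ this
  · have := hΦanti E y h hy
    rw [hΦE, hΦy] at this; exact lt_irrefl _ this
end

section
/- For a, b ∈ ℝ with a ≤ 0, b ≤ 0 and c > 0 satisfying a+b+c > 0, a+c > 0, b+c > 0, the quantity Ψ := 1/(a+b+c) - 1/(a+c) - 1/(b+c) + 1/c satisfies 0 ≤ Ψ = ab(a+b+2c)/(c(a+c)(b+c)(a+b+c)) ≤ √(ab)·(-a-b)/((a+c)(b+c)(a+b+c)). -/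
/-- For `a ≤ 0`, `b ≤ 0`, `c > 0` with `a+b+c > 0`, `a+c > 0`, `b+c > 0`, the
quantity `Ψ = 1/(a+b+c) - 1/(a+c) - 1/(b+c) + 1/c` satisfies
`0 ≤ Ψ = ab(a+b+2c)/(c(a+c)(b+c)(a+b+c)) ≤ √(ab)·(-a-b)/((a+c)(b+c)(a+b+c))`. -/
theorem psi2_kernel_estimate
    (a b c : ℝ) (ha : a ≤ 0) (hb : b ≤ 0) (hc : 0 < c)
    (habc : 0 < a + b + c) (hac : 0 < a + c) (hbc : 0 < b + c) :
    0 ≤ 1 / (a + b + c) - 1 / (a + c) - 1 / (b + c) + 1 / c ∧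
    1 / (a + b + c) - 1 / (a + c) - 1 / (b + c) + 1 / c =
      a * b * (a + b + 2 * c) / (c * (a + c) * (b + c) * (a + b + c)) ∧
    1 / (a + b + c) - 1 / (a + c) - 1 / (b + c) + 1 / c ≤
      Real.sqrt (a * b) * (-a - b) / ((a + c) * (b + c) * (a + b + c)) := by
  have hab : 0 ≤ a * b := by nlinarith
  have heq : 1 / (a + b + c) - 1 / (a + c) - 1 / (b + c) + 1 / c =
      a * b * (a + b + 2 * c) / (c * (a + c) * (b + c) * (a + b + c)) := by
    field_simp
    ring
  have hD : 0 < c * (a + c) * (b + c) * (a + b + c) := by positivity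
  have hnum : 0 ≤ a * b * (a + b + 2 * c) := by nlinarith
  refine ⟨by rw [heq]; positivity, heq, ?_⟩
  rw [heq]
  set s := Real.sqrt (a * b) with hsdef
  have hs0 : 0 ≤ s := Real.sqrt_nonneg _
  have hs2 : s ^ 2 = a * b := Real.sq_sqrt hab
  have h2s : 2 * s ≤ -a - b := by nlinarith [sq_nonneg (a - b)]
  rw [div_le_div_iff₀ hD (by positivity)]
  have key : a * b * (a + b + 2 * c) ≤ c * (s * (-a - b)) := by
    nlinarith [mul_nonneg (mul_nonneg hc.le hs0) (by linarith : (0:ℝ) ≤ -a - b - 2 * s),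
      mul_nonpos_of_nonneg_of_nonpos (sq_nonneg s) (by linarith : a + b ≤ 0)]
  calc a * b * (a + b + 2 * c) * ((a + c) * (b + c) * (a + b + c))
      ≤ c * (s * (-a - b)) * ((a + c) * (b + c) * (a + b + c)) := by
        apply mul_le_mul_of_nonneg_right key (by positivity)
    _ = s * (-a - b) * (c * (a + c) * (b + c) * (a + b + c)) := by ring
end

section
/- Suppose E < ω₀+γ satisfies Φ(E) = 0, i.e. -γ - E = α² ∫ |λ(q)|²/(ω(q)+γ-E) dq. Then for all k ∈ ℝ^d, -Δ(k; ω₁+E) = (ω₁-ω(k))·(1 + α² ∫ |λ(q)|²/((ω(q)+γ-E)(ω(k)+ω(q)+γ-ω₁-E)) dq), where Δ(k;z) = ω(k) - γ - z - α² ∫ |λ(q)|²/(ω(k)+ω(q)+γ-z) dq. In particular, if additionally 2ω₀+γ-ω₁-E > 0, then -Δ(k; ω₁+E) ≥ ω₁-ω(k) ≥ 0 for all k. -/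
open MeasureTheory

/-- If `E < ω₀+γ` is a zero of `Φ`, then for all `k`,
`-Δ(k;ω₁+E) = (ω₁-ω(k))(1 + α² ∫ |λ(q)|²/((ω(q)+γ-E)(ω(k)+ω(q)+γ-ω₁-E)) dq)`.
In particular, if `2ω₀+γ-ω₁-E > 0`, then `-Δ(k;ω₁+E) ≥ ω₁-ω(k) ≥ 0`. -/
theorem delta_identity_at_omega1_plus_E
    (d : ℕ) (γ α : ℝ) (hα : 0 < α)
    (ω : (Fin d → ℝ) → ℝ) (hωpos : ∀ k, 0 ≤ ω k) (hωmeas : Measurable ω)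
    (hωbdd : BddAbove (Set.range ω))
    (ω₀ ω₁ : ℝ) (hω₀ : ω₀ = ⨅ k, ω k) (hω₁ : ω₁ = ⨆ k, ω k)
    (lam : (Fin d → ℝ) → ℝ) (hlammeas : AEStronglyMeasurable lam volume)
    (E : ℝ) (hE : E < ω₀ + γ)
    (hΦE : -γ - E = α ^ 2 * ∫ q, lam q ^ 2 / (ω q + γ - E))
    (hintE : Integrable (fun q => lam q ^ 2 / (ω q + γ - E)))
    (hden : ∀ k q : Fin d → ℝ, ω k + ω q + γ - ω₁ - E ≠ 0)
    (hint1 : ∀ k, Integrable (fun q => lam q ^ 2 / (ω k + ω q + γ - ω₁ - E)))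
    (hint2 : ∀ k, Integrable
      (fun q => lam q ^ 2 / ((ω q + γ - E) * (ω k + ω q + γ - ω₁ - E))))
    (Δ : (Fin d → ℝ) → ℝ → ℝ)
    (hΔ : ∀ k z, Δ k z =
      ω k - γ - z - α ^ 2 * ∫ q, lam q ^ 2 / (ω k + ω q + γ - z)) :
    (∀ k, -Δ k (ω₁ + E) =
      (ω₁ - ω k) * (1 + α ^ 2 *
        ∫ q, lam q ^ 2 / ((ω q + γ - E) * (ω k + ω q + γ - ω₁ - E)))) ∧
    (0 < 2 * ω₀ + γ - ω₁ - E →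
      ∀ k, ω₁ - ω k ≤ -Δ k (ω₁ + E) ∧ 0 ≤ ω₁ - ω k) := by
  have hωk_le : ∀ k, ω k ≤ ω₁ := fun k => hω₁ ▸ le_ciSup hωbdd k
  have hω₀_le : ∀ q, ω₀ ≤ ω q := fun q =>
    hω₀ ▸ ciInf_le ⟨0, fun x hx => by obtain ⟨k, rfl⟩ := hx; exact hωpos k⟩ q
  have hA : ∀ q, 0 < ω q + γ - E := fun q => by linarith [hω₀_le q]
  have key : ∀ k, -Δ k (ω₁ + E) =
      (ω₁ - ω k) * (1 + α ^ 2 *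
        ∫ q, lam q ^ 2 / ((ω q + γ - E) * (ω k + ω q + γ - ω₁ - E))) := by
    intro k
    have hfun : (fun q => lam q ^ 2 / (ω k + ω q + γ - (ω₁ + E)))
        = fun q => lam q ^ 2 / (ω k + ω q + γ - ω₁ - E) := by
      funext q; ring_nf
    have hsub : (∫ q, lam q ^ 2 / (ω k + ω q + γ - ω₁ - E))
        - ∫ q, lam q ^ 2 / (ω q + γ - E)
        = ∫ q, (lam q ^ 2 / (ω k + ω q + γ - ω₁ - E)
            - lam q ^ 2 / (ω q + γ - E)) :=
      (integral_sub (hint1 k) hintE).symm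
    have hpt : ∀ q, lam q ^ 2 / (ω k + ω q + γ - ω₁ - E)
        - lam q ^ 2 / (ω q + γ - E)
        = (ω₁ - ω k) * (lam q ^ 2 / ((ω q + γ - E) * (ω k + ω q + γ - ω₁ - E))) := by
      intro q
      have hB := hden k q
      have hA' := (hA q).ne'
      field_simp
      ring
    have hI : (∫ q, lam q ^ 2 / (ω k + ω q + γ - ω₁ - E))
        - ∫ q, lam q ^ 2 / (ω q + γ - E)
        = (ω₁ - ω k) * ∫ q, lam q ^ 2 / ((ω q + γ - E) * (ω k + ω q + γ - ω₁ - E)) := by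
      rw [hsub]
      simp_rw [hpt]
      exact integral_const_mul _ _
    rw [hΔ k (ω₁ + E), hfun]
    nlinarith [hΦE, hI]
  refine ⟨key, fun hpos k => ?_⟩
  have hnn : 0 ≤ ω₁ - ω k := by linarith [hωk_le k]
  have hint_nn : 0 ≤ ∫ q, lam q ^ 2 / ((ω q + γ - E) * (ω k + ω q + γ - ω₁ - E)) := by
    apply integral_nonneg
    intro q
    have hB : 0 < ω k + ω q + γ - ω₁ - E := by linarith [hω₀_le q, hω₀_le k]
    exact div_nonneg (sq_nonneg _) (le_of_lt (mul_pos (hA q) hB))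
  constructor
  · rw [key k]
    nlinarith [mul_nonneg hnn (mul_nonneg (sq_nonneg α) hint_nn)]
  · exact hnn
end

section
/- Suppose Φ(ω₁+γ) := -2γ - ω₁ + α² ∫ |λ(q)|²/(ω₁-ω(q)) dq is finite and Φ(ω₁+γ) ≤ 0. Then for all k ∈ ℝ^d with ω(k) < ω₁, Δ(k; 2ω₁+γ) ≤ (ω(k)-ω₁)·(1 + α² ∫ |λ(q)|²/((ω₁-ω(q))(2ω₁-ω(k)-ω(q))) dq), and consequently -Δ(k; 2ω₁+γ) ≥ ω₁ - ω(k) for all k ∈ ℝ^d, where Δ(k;z) = ω(k) - γ - z - α² ∫ |λ(q)|²/(ω(k)+ω(q)+γ-z) dq. -/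
open MeasureTheory

/-- If `Φ(ω₁+γ) = -2γ - ω₁ + α² ∫ |λ(q)|²/(ω₁-ω(q)) dq` is finite and `≤ 0`,
then for `ω(k) < ω₁`,
`Δ(k;2ω₁+γ) ≤ (ω(k)-ω₁)(1 + α² ∫ |λ(q)|²/((ω₁-ω(q))(2ω₁-ω(k)-ω(q))) dq)`,
and consequently `-Δ(k;2ω₁+γ) ≥ ω₁ - ω(k)` for all `k`. -/
theorem delta_bound_top
    (d : ℕ) (γ α : ℝ) (hα : 0 < α)
    (ω : (Fin d → ℝ) → ℝ) (hωpos : ∀ k, 0 ≤ ω k) (hωmeas : Measurable ω)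
    (hωbdd : BddAbove (Set.range ω))
    (ω₁ : ℝ) (hω₁ : ω₁ = ⨆ k, ω k)
    (hae : ∀ᵐ q, ω q < ω₁)
    (lam : (Fin d → ℝ) → ℝ) (hlammeas : AEStronglyMeasurable lam volume)
    (hir : Integrable (fun q => lam q ^ 2 / (ω₁ - ω q)))
    (hΦle : -2 * γ - ω₁ + α ^ 2 * (∫ q, lam q ^ 2 / (ω₁ - ω q)) ≤ 0)
    (hint1 : ∀ k, Integrable (fun q => lam q ^ 2 / (ω k + ω q - 2 * ω₁)))
    (hint2 : ∀ k, Integrable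
      (fun q => lam q ^ 2 / ((ω₁ - ω q) * (2 * ω₁ - ω k - ω q))))
    (Δ : (Fin d → ℝ) → ℝ → ℝ)
    (hΔ : ∀ k z, Δ k z =
      ω k - γ - z - α ^ 2 * ∫ q, lam q ^ 2 / (ω k + ω q + γ - z)) :
    (∀ k, ω k < ω₁ →
      Δ k (2 * ω₁ + γ) ≤
        (ω k - ω₁) * (1 + α ^ 2 *
          ∫ q, lam q ^ 2 / ((ω₁ - ω q) * (2 * ω₁ - ω k - ω q)))) ∧
    (∀ k, ω₁ - ω k ≤ -Δ k (2 * ω₁ + γ)) := by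
  have hsup : ∀ k, ω k ≤ ω₁ := fun k => hω₁ ▸ le_ciSup hωbdd k
  have hden : ∀ k, (fun q => lam q ^ 2 / (ω k + ω q + γ - (2 * ω₁ + γ)))
      = fun q => lam q ^ 2 / (ω k + ω q - 2 * ω₁) := by
    intro k; funext q; ring_nf
  have key : ∀ k, ω k < ω₁ →
      (∫ q, lam q ^ 2 / (ω k + ω q - 2 * ω₁)) =
      -(∫ q, lam q ^ 2 / (ω₁ - ω q)) + (ω₁ - ω k) *
        ∫ q, lam q ^ 2 / ((ω₁ - ω q) * (2 * ω₁ - ω k - ω q)) := by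
    intro k hk
    have hcongr : (fun q => lam q ^ 2 / (ω k + ω q - 2 * ω₁)) =ᵐ[volume]
        fun q => -(lam q ^ 2 / (ω₁ - ω q)) + (ω₁ - ω k) *
          (lam q ^ 2 / ((ω₁ - ω q) * (2 * ω₁ - ω k - ω q))) := by
      filter_upwards [hae] with q hq
      have h1 : ω₁ - ω q ≠ 0 := ne_of_gt (by linarith)
      have h2 : (2 : ℝ) * ω₁ - ω k - ω q ≠ 0 := ne_of_gt (by linarith)
      have h3 : ω k + ω q - 2 * ω₁ ≠ 0 := by intro h; apply h2; linarith
      field_simp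
      ring
    have hf : Integrable (fun q => -(lam q ^ 2 / (ω₁ - ω q))) := hir.neg
    have hg : Integrable (fun q => (ω₁ - ω k) *
        (lam q ^ 2 / ((ω₁ - ω q) * (2 * ω₁ - ω k - ω q)))) :=
      (hint2 k).const_mul _
    rw [integral_congr_ae hcongr, integral_add hf hg, integral_neg,
      integral_const_mul]
  have I2pos : ∀ k, ω k < ω₁ →
      0 ≤ ∫ q, lam q ^ 2 / ((ω₁ - ω q) * (2 * ω₁ - ω k - ω q)) := by
    intro k hk
    refine integral_nonneg_of_ae ?_
    filter_upwards [hae] with q hq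
    have h1 : (0:ℝ) < ω₁ - ω q := by linarith
    have h2 : (0:ℝ) < 2 * ω₁ - ω k - ω q := by linarith
    positivity
  have part1 : ∀ k, ω k < ω₁ →
      Δ k (2 * ω₁ + γ) ≤ (ω k - ω₁) * (1 + α ^ 2 *
        ∫ q, lam q ^ 2 / ((ω₁ - ω q) * (2 * ω₁ - ω k - ω q))) := by
    intro k hk
    rw [hΔ, hden k, key k hk]
    nlinarith [hΦle]
  refine ⟨part1, fun k => ?_⟩
  rcases lt_or_eq_of_le (hsup k) with hk | hk
  · have h1 := part1 k hk
    have h2 := I2pos k hk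
    have h3 : 0 ≤ (ω₁ - ω k) * (α ^ 2 *
        ∫ q, lam q ^ 2 / ((ω₁ - ω q) * (2 * ω₁ - ω k - ω q))) :=
      mul_nonneg (by linarith) (mul_nonneg (sq_nonneg α) h2)
    nlinarith [h1, h3]
  · have hcongr : (fun q => lam q ^ 2 / (ω k + ω q - 2 * ω₁)) =ᵐ[volume]
        fun q => -(lam q ^ 2 / (ω₁ - ω q)) := by
      filter_upwards [hae] with q hq
      have : ω k + ω q - 2 * ω₁ = -(ω₁ - ω q) := by rw [hk]; ring
      rw [this, div_neg]
    rw [hΔ, hden k, integral_congr_ae hcongr, integral_neg]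
    linarith
end
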